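/- Let U ∈ ℝ³ and s₁, s₃ ∈ ℝ, and define r₁(u,v,w) = (1,0,v), r₃(u,v,w) = (1,0,v−2). Then the 1- and 3-shock curves of the Baiti–Jenssen system commute with unchanged strengths: U + s₃ • r₃(U) + s₁ • r₁(U + s₃ • r₃(U)) = U + s₁ • r₁(U) + s₃ • r₃(U + s₁ • r₁(U)). In particular, if an incoming 3-shock of strength s₃ (from U to U_m = U + s₃ r₃(U)) interacts with an incoming 1-shock of strength s₁ (from U_m to U_r = U_m + s₁ r₁(U_m)), then there is a middle state U_m′ = U + s₁ r₁(U) such that U_r = U_m′ + s₃ r₃(U_m′), i.e., the interaction produces an outgoing 1-shock and an outgoing 3-shock with the same strengths s₁ and s₃. -/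
import Mathlib


/-- The right eigenvector field of the first family of the Baiti–Jenssen system. -/
def BJr1 : ℝ × ℝ × ℝ → ℝ × ℝ × ℝ := fun U => (1, 0, U.2.1)

/-- The right eigenvector field of the third family of the Baiti–Jenssen system. -/
def BJr3 : ℝ × ℝ × ℝ → ℝ × ℝ × ℝ := fun U => (1, 0, U.2.1 - 2)

theorem bj_13_interaction (U : ℝ × ℝ × ℝ) (s₁ s₃ : ℝ) :
    (U + s₃ • BJr3 U + s₁ • BJr1 (U + s₃ • BJr3 U) =
      U + s₁ • BJr1 U + s₃ • BJr3 (U + s₁ • BJr1 U)) ∧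
    (∀ Um Ur Um' : ℝ × ℝ × ℝ,
      Um = U + s₃ • BJr3 U → Ur = Um + s₁ • BJr1 Um → Um' = U + s₁ • BJr1 U →
        Ur = Um' + s₃ • BJr3 Um') := by
  have key : U + s₃ • BJr3 U + s₁ • BJr1 (U + s₃ • BJr3 U) =
      U + s₁ • BJr1 U + s₃ • BJr3 (U + s₁ • BJr1 U) := by
    simp only [BJr1, BJr3, Prod.smul_mk, Prod.mk_add_mk, Prod.ext_iff,
      Prod.fst_add, Prod.snd_add, Prod.smul_fst, Prod.smul_snd, smul_eq_mul]
    constructor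
    · ring
    constructor
    · ring
    · ring
  exact ⟨key, fun Um Ur Um' hm hr hm' => by subst hm hr hm'; exact key⟩
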